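/- Let λ be a strict partition with inner corner contents x_0 = 1 < x_1 < ... < x_m and outer corner contents y_1 < ... < y_m, and let λ⁺ = λ ∪ {□} be a strict partition obtained by adding a box □ of content c_□ = x_i. If i = 0, then H_λ / H_{λ⁺} = Π_{j=1}^{m} (C(x_0,2) − C(y_j,2)) / Π_{j=1}^{m} (C(x_0,2) − C(x_j,2)). If 1 ≤ i ≤ m, then H_λ / H_{λ⁺} = (1/2) · Π_{j=1}^{m} (C(x_i,2) − C(y_j,2)) / Π_{0≤j≤m, j≠i} (C(x_i,2) − C(x_j,2)). -/

import Mathlib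

open scoped BigOperators

/-- A strict partition: a strictly decreasing list of positive integers. -/
structure StrictPartition where
  parts : List ℕ
  pos : ∀ p ∈ parts, 0 < p
  sorted : parts.Pairwise (· > ·)

namespace StrictPartition

/-- The `i`-th part (1-indexed); `0` for `i` beyond the length. -/
def part (lam : StrictPartition) (i : ℕ) : ℕ := lam.parts.getD (i - 1) 0

/-- The size `|λ|` of a strict partition. -/
def size (lam : StrictPartition) : ℕ := lam.parts.sum

/-- The length `ℓ(λ)` (number of parts) of a strict partition. -/
def length (lam : StrictPartition) : ℕ := lam.parts.length

/-- The cells of the shifted Young diagram: row `i` occupies columns `i+1, …, i+λᵢ`. -/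
def cells (lam : StrictPartition) : Finset (ℕ × ℕ) :=
  (Finset.range (lam.size + lam.length + 2) ×ˢ
      Finset.range (lam.size + lam.length + 2)).filter
    (fun b => 1 ≤ b.1 ∧ b.1 < b.2 ∧ b.2 ≤ b.1 + lam.part b.1)

/-- The content of a box `(i,j)` is `j - i`. -/
def content (b : ℕ × ℕ) : ℕ := b.2 - b.1

/-- The hook length of a box `(i,j)`: the number of boxes strictly below it in its
column, plus the number strictly to its right in its row, plus `1`, plus `λ_j`. -/
def hook (lam : StrictPartition) (b : ℕ × ℕ) : ℕ :=
  (lam.cells.filter (fun b' => b'.2 = b.2 ∧ b.1 < b'.1)).card +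
  (lam.cells.filter (fun b' => b'.1 = b.1 ∧ b.2 < b'.2)).card + 1 + lam.part b.2

/-- `H_λ`, the product of the hook lengths of all boxes of `λ`. -/
def H (lam : StrictPartition) : ℕ := ∏ b ∈ lam.cells, lam.hook b

/-- `μ ≤ λ` iff `μᵢ ≤ λᵢ` for all `i`. -/
instance : LE StrictPartition := ⟨fun mu lam => ∀ i, mu.part i ≤ lam.part i⟩

/-- The cells of the skew shifted diagram `λ/μ`. -/
def skewCells (mu lam : StrictPartition) : Finset (ℕ × ℕ) := lam.cells \ mu.cells

/-- `f_{λ/μ}`: the number of standard shifted Young tableaux of skew shape `λ/μ`,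
i.e. bijective fillings of the cells of `λ/μ` with `0, 1, …, n-1` increasing along
rows and columns. -/
noncomputable def fskew (mu lam : StrictPartition) : ℕ :=
  Nat.card {T : {b // b ∈ skewCells mu lam} → Fin (skewCells mu lam).card //
    Function.Bijective T ∧
    (∀ a b : {b // b ∈ skewCells mu lam},
      (a : ℕ × ℕ).1 = (b : ℕ × ℕ).1 → (a : ℕ × ℕ).2 < (b : ℕ × ℕ).2 → T a < T b) ∧
    (∀ a b : {b // b ∈ skewCells mu lam},
      (a : ℕ × ℕ).2 = (b : ℕ × ℕ).2 → (a : ℕ × ℕ).1 < (b : ℕ × ℕ).1 → T a < T b)}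

/-- The empty strict partition. -/
def empty : StrictPartition := ⟨[], by simp, List.Pairwise.nil⟩

/-- `f_λ`: the number of standard shifted Young tableaux of shape `λ`. -/
noncomputable def f (lam : StrictPartition) : ℕ := fskew empty lam

/-- `f'_{λ/μ} = 2^{|λ|-|μ|-ℓ(λ)+ℓ(μ)} f_{λ/μ}`. -/
noncomputable def fPrime (mu lam : StrictPartition) : ℚ :=
  (2 : ℚ) ^ ((lam.size : ℤ) - mu.size - lam.length + mu.length) * fskew mu lam

/-- `λ⁺` is obtained from `λ` by adding one box. -/
def AddBox (lam lam' : StrictPartition) : Prop := lam ≤ lam' ∧ lam'.size = lam.size + 1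

/-- The difference operator `D` for strict partitions. -/
noncomputable def D (g : StrictPartition → ℚ) (lam : StrictPartition) : ℚ :=
  (∑ᶠ nu ∈ {nu : StrictPartition | lam.AddBox nu ∧ lam.length < nu.length}, g nu) +
  2 * (∑ᶠ nu ∈ {nu : StrictPartition | lam.AddBox nu ∧ nu.length = lam.length}, g nu) -
  g lam

/-- The boxes that can be removed from `λ` leaving (the diagram of) a strict
partition: the outer corners. -/
def removableCells (lam : StrictPartition) : Set (ℕ × ℕ) :=
  {b | b ∈ lam.cells ∧ ∃ mu : StrictPartition, mu.cells = lam.cells.erase b}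

/-- The boxes that can be added to `λ` giving (the diagram of) a strict partition. -/
def addableCells (lam : StrictPartition) : Set (ℕ × ℕ) :=
  {b | b ∉ lam.cells ∧ ∃ mu : StrictPartition, mu.cells = insert b lam.cells}

/-- The contents `x_0 = 1 < x_1 < ⋯ < x_m` of the inner corners of `λ`. -/
def innerContents (lam : StrictPartition) : Set ℕ :=
  insert 1 (content '' lam.addableCells)

/-- The contents `y_1 < ⋯ < y_m` of the outer corners of `λ`. -/
def outerContents (lam : StrictPartition) : Set ℕ :=
  content '' lam.removableCells

/-- `q_k(λ) = ∑_{i=0}^m C(xᵢ,2)^k − ∑_{i=1}^m C(yᵢ,2)^k`. -/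
noncomputable def q (k : ℕ) (lam : StrictPartition) : ℚ :=
  (∑ᶠ c ∈ lam.innerContents, ((c.choose 2 : ℚ)) ^ k) -
  (∑ᶠ c ∈ lam.outerContents, ((c.choose 2 : ℚ)) ^ k)

/-- `q_ν(λ) = ∏_j q_{ν_j}(λ)` for a partition `ν` given as a multiset of parts. -/
noncomputable def qPart (nu : Multiset ℕ) (lam : StrictPartition) : ℚ :=
  (nu.map (fun k => q k lam)).prod

end StrictPartition

/-!
By Schur's formula `H_λ = ∏ᵢ λᵢ! ∏_{i<j} (λᵢ + λⱼ) / (λᵢ - λⱼ)`, `H_λ` depends only on the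
set `V` of parts. The formula is proved by peeling off the first row, whose
hook lengths are `λ₁ + λⱼ` in the columns `j ≤ ℓ(λ)` and `λ₁ - v`, for the gaps `v < λ₁` of `V`,
in the other columns.

Adding a box of content `c = p + 1` replaces the part `p` by `p + 1` (a new row is a part `0`
becoming `1`, and a part `0` does not change the formula). Hence
`H_λ / H_{λ⁺} = (p + 1)⁻¹ ∏_{u ∈ V ∖ {p}} φ(u) / φ(u + 1)` with `φ(w) = C(c,2) - C(w,2)`.
This telescopes to the product of `φ` over the outer corner contents `V ∖ (V + 1)` divided by
the product over the inner corner contents `(V + 1) ∖ V`; the left-over factors `φ(p) = p` and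
`φ(1) = p (p + 1) / 2` produce the `1/2`.
-/

open Finset
open scoped Nat

namespace StrictPartition

variable (lam : StrictPartition)

lemma part_eq_zero {i : ℕ} (h : lam.length < i) : lam.part i = 0 :=
  List.getD_eq_default _ _ (by unfold length at h; omega)

lemma part_pos {i : ℕ} (h1 : 1 ≤ i) (h2 : i ≤ lam.length) : 0 < lam.part i := by
  have hi : i - 1 < lam.parts.length := by unfold length at h2; omega
  rw [part, List.getD_eq_getElem _ _ hi]
  exact lam.pos _ (List.getElem_mem hi)

lemma le_length_of_part_pos {i : ℕ} (h : 0 < lam.part i) : i ≤ lam.length := by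
  by_contra hc
  rw [part_eq_zero lam (by omega)] at h
  omega

lemma part_lt_part {i j : ℕ} (hi : 1 ≤ i) (hij : i < j) (hj : j ≤ lam.length) :
    lam.part j < lam.part i := by
  have hj' : j - 1 < lam.parts.length := by unfold length at hj; omega
  rw [part, part, List.getD_eq_getElem _ _ hj', List.getD_eq_getElem _ _ (by omega)]
  exact List.pairwise_iff_getElem.mp lam.sorted _ _ _ _ (by omega)

lemma part_add_sub_le {i j : ℕ} (hi : 1 ≤ i) (hij : i ≤ j) (hj : j ≤ lam.length) :
    lam.part j + (j - i) ≤ lam.part i := by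
  induction j, hij using Nat.le_induction with
  | base => simp
  | succ j hij ih =>
    have := part_lt_part lam (show 1 ≤ j by omega) (show j < j + 1 by omega) hj
    have := ih (by omega)
    omega

lemma eq_of_part_eq {i j : ℕ} (hi : 1 ≤ i) (hj : 1 ≤ j) (h : lam.part i = lam.part j)
    (hpos : 0 < lam.part i) : i = j := by
  have hil := le_length_of_part_pos lam hpos
  have hjl := le_length_of_part_pos lam (h ▸ hpos)
  rcases lt_trichotomy i j with hij | hij | hij
  · exact absurd h (part_lt_part lam hi hij hjl).ne'
  · exact hij
  · exact absurd h (part_lt_part lam hj hij hil).ne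

lemma part_le_size (i : ℕ) : lam.part i ≤ lam.size := by
  rw [part]
  rcases lt_or_ge (i - 1) lam.parts.length with h | h
  · rw [List.getD_eq_getElem _ _ h]
    exact List.le_sum_of_mem (List.getElem_mem h)
  · rw [List.getD_eq_default _ _ h]
    exact Nat.zero_le _

lemma mem_cells {i j : ℕ} :
    (i, j) ∈ lam.cells ↔ 1 ≤ i ∧ i < j ∧ j ≤ i + lam.part i := by
  refine ⟨fun h => (mem_filter.mp h).2, fun h => mem_filter.mpr ⟨?_, h⟩⟩
  have := le_length_of_part_pos lam (show 0 < lam.part i by omega)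
  have := part_le_size lam i
  simp only [mem_product, mem_range]
  omega

def partSet : Finset ℕ := lam.parts.toFinset

lemma mem_partSet {w : ℕ} :
    w ∈ lam.partSet ↔ ∃ i, 1 ≤ i ∧ i ≤ lam.length ∧ lam.part i = w := by
  rw [partSet, List.mem_toFinset, List.mem_iff_getElem]
  constructor
  · rintro ⟨k, hk, rfl⟩
    exact ⟨k + 1, by omega, hk, List.getD_eq_getElem _ _ hk⟩
  · rintro ⟨i, h1, h2, rfl⟩
    have hi : i - 1 < lam.parts.length := by unfold length at h2; omega
    exact ⟨i - 1, hi, (List.getD_eq_getElem _ _ hi).symm⟩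

lemma part_mem_partSet {i : ℕ} (h1 : 1 ≤ i) (h2 : i ≤ lam.length) :
    lam.part i ∈ lam.partSet :=
  (mem_partSet lam).mpr ⟨i, h1, h2, rfl⟩

lemma mem_partSet_iff_pos {w : ℕ} :
    w ∈ lam.partSet ↔ 0 < w ∧ ∃ i, 1 ≤ i ∧ lam.part i = w := by
  rw [mem_partSet]
  constructor
  · rintro ⟨i, h1, h2, rfl⟩
    exact ⟨part_pos lam h1 h2, i, h1, rfl⟩
  · rintro ⟨hw, i, h1, rfl⟩
    exact ⟨i, h1, le_length_of_part_pos lam hw, rfl⟩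

lemma zero_notMem_partSet : 0 ∉ lam.partSet := fun h => ((mem_partSet_iff_pos lam).mp h).1.ne rfl

lemma card_partSet : #lam.partSet = lam.length :=
  List.toFinset_card_of_nodup lam.sorted.nodup

lemma partSet_eq_image : lam.partSet = (Icc 1 lam.length).image lam.part := by
  ext w
  simp only [mem_partSet, mem_image, mem_Icc, and_assoc]

lemma injOn_part : Set.InjOn lam.part (Icc 1 lam.length) := by
  intro i hi j hj h
  simp only [coe_Icc, Set.mem_Icc] at hi hj
  exact eq_of_part_eq lam hi.1 hj.1 h (part_pos lam hi.1 hi.2)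

lemma prod_partSet {M : Type*} [CommMonoid M] (f : ℕ → M) :
    ∏ v ∈ lam.partSet, f v = ∏ i ∈ Icc 1 lam.length, f (lam.part i) := by
  rw [partSet_eq_image, prod_image (injOn_part lam)]

lemma card_arm {i j : ℕ} (h : (i, j) ∈ lam.cells) :
    #{b ∈ lam.cells | b.1 = i ∧ j < b.2} = i + lam.part i - j := by
  rw [mem_cells] at h
  have : {b ∈ lam.cells | b.1 = i ∧ j < b.2} = (Ioc j (i + lam.part i)).image (Prod.mk i) := by
    ext ⟨a, c⟩
    simp only [mem_filter, mem_image, mem_Ioc, mem_cells, Prod.mk.injEq]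
    constructor
    · rintro ⟨⟨-, -, hc⟩, rfl, hjc⟩
      exact ⟨c, ⟨hjc, hc⟩, rfl, rfl⟩
    · rintro ⟨c, ⟨hjc, hc⟩, rfl, rfl⟩
      exact ⟨⟨h.1, by omega, hc⟩, rfl, hjc⟩
  rw [this, card_image_of_injective _ (Prod.mk_right_injective i), Nat.card_Ioc]

lemma card_leg {i j : ℕ} (hi : 1 ≤ i) :
    #{b ∈ lam.cells | b.2 = j ∧ i < b.1} = #{a ∈ Ioc i (j - 1) | j ≤ a + lam.part a} := by
  have : {b ∈ lam.cells | b.2 = j ∧ i < b.1} =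
      {a ∈ Ioc i (j - 1) | j ≤ a + lam.part a}.image (fun a => (a, j)) := by
    ext ⟨a, c⟩
    simp only [mem_filter, mem_image, mem_Ioc, mem_cells, Prod.mk.injEq]
    constructor
    · rintro ⟨⟨-, hac, hc⟩, rfl, hia⟩
      exact ⟨a, ⟨⟨hia, by omega⟩, hc⟩, rfl, rfl⟩
    · rintro ⟨a, ⟨⟨hia, haj⟩, hj⟩, rfl, rfl⟩
      exact ⟨⟨by omega, by omega, hj⟩, rfl, hia⟩
  rw [this, card_image_of_injective _ (Prod.mk_left_injective j)]

lemma hook_eq {i j : ℕ} (h : (i, j) ∈ lam.cells) :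
    lam.hook (i, j) =
      #{a ∈ Ioc i (j - 1) | j ≤ a + lam.part a} + (i + lam.part i - j) + 1 + lam.part j := by
  rw [hook, card_arm lam h, card_leg lam ((mem_cells lam).mp h).1]

def tail : StrictPartition :=
  ⟨lam.parts.tail, fun p hp => lam.pos p (List.mem_of_mem_tail hp), lam.sorted.tail⟩

lemma tail_length : lam.tail.length = lam.length - 1 := lam.parts.length_tail

lemma tail_part {k : ℕ} (hk : 1 ≤ k) : lam.tail.part k = lam.part (k + 1) := by
  show lam.parts.tail.getD (k - 1) 0 = lam.parts.getD (k + 1 - 1) 0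
  obtain ⟨k, rfl⟩ := Nat.exists_eq_add_of_le' hk
  cases lam.parts <;> simp

lemma mem_tail_partSet {w : ℕ} :
    w ∈ lam.tail.partSet ↔ w ∈ lam.partSet ∧ w < lam.part 1 := by
  simp only [mem_partSet, tail_length]
  constructor
  · rintro ⟨k, hk1, hk, rfl⟩
    rw [tail_part lam hk1]
    exact ⟨⟨k + 1, by omega, by omega, rfl⟩, part_lt_part lam le_rfl (by omega) (by omega)⟩
  · rintro ⟨⟨i, hi1, hi, rfl⟩, hlt⟩
    have : i ≠ 1 := by rintro rfl; exact lt_irrefl _ hlt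
    exact ⟨i - 1, by omega, by omega, by rw [tail_part lam (by omega)]; congr 1; omega⟩

lemma cells_eq_union : lam.cells = (Ioc 1 (1 + lam.part 1)).image (Prod.mk 1) ∪
    lam.tail.cells.image (fun b => (b.1 + 1, b.2 + 1)) := by
  ext ⟨i, j⟩
  simp only [mem_union, mem_image, mem_Ioc, mem_cells, Prod.mk.injEq, Prod.exists]
  constructor
  · rintro ⟨h1, h2, h3⟩
    rcases h1.eq_or_lt with rfl | h1
    · exact Or.inl ⟨j, ⟨h2, h3⟩, rfl, rfl⟩
    · refine Or.inr ⟨i - 1, j - 1, ?_, by omega, by omega⟩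
      rw [tail_part lam (by omega), Nat.sub_add_cancel h1.le]
      omega
  · rintro (⟨j, hj, rfl, rfl⟩ | ⟨a, c, ⟨ha, hac, hc⟩, rfl, rfl⟩)
    · omega
    · rw [tail_part lam ha] at hc
      omega

lemma hook_add_one_add_one {i j : ℕ} (hb : (i, j) ∈ lam.tail.cells) :
    lam.hook (i + 1, j + 1) = lam.tail.hook (i, j) := by
  obtain ⟨hi, hij, hj⟩ := (mem_cells _).mp hb
  rw [tail_part lam hi] at hj
  rw [hook_eq lam ((mem_cells lam).mpr ⟨by omega, by omega, by omega⟩), hook_eq _ hb,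
    tail_part lam hi, tail_part lam (by omega : 1 ≤ j)]
  have : {a ∈ Ioc (i + 1) (j + 1 - 1) | j + 1 ≤ a + lam.part a} =
      {a ∈ Ioc i (j - 1) | j ≤ a + lam.tail.part a}.image (· + 1) := by
    ext a
    simp only [mem_filter, mem_image, mem_Ioc]
    constructor
    · rintro ⟨⟨ha1, ha2⟩, ha3⟩
      refine ⟨a - 1, ⟨⟨by omega, by omega⟩, ?_⟩, by omega⟩
      rw [tail_part lam (by omega), Nat.sub_add_cancel (by omega : 1 ≤ a)]
      omega
    · rintro ⟨a, ⟨⟨ha1, ha2⟩, ha3⟩, rfl⟩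
      rw [tail_part lam (by omega)] at ha3
      exact ⟨⟨by omega, by omega⟩, by omega⟩
  rw [this, card_image_of_injective _ (add_left_injective 1)]
  omega

lemma H_eq_mul_H_tail :
    lam.H = (∏ j ∈ Ioc 1 (1 + lam.part 1), lam.hook (1, j)) * lam.tail.H := by
  have hdisj : Disjoint ((Ioc 1 (1 + lam.part 1)).image (Prod.mk 1))
      (lam.tail.cells.image (fun b => (b.1 + 1, b.2 + 1))) := by
    simp only [disjoint_left, mem_image, mem_cells, not_exists, not_and, Prod.forall]
    rintro _ _ ⟨c, -, h⟩ a c' ⟨ha, -⟩ h'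
    rw [← h', Prod.mk.injEq] at h
    omega
  have hinj : Set.InjOn (fun b : ℕ × ℕ => (b.1 + 1, b.2 + 1)) lam.tail.cells := by
    intro a _ b _ h
    simp only [Prod.mk.injEq] at h
    exact Prod.ext (by omega) (by omega)
  rw [H, cells_eq_union, prod_union hdisj, prod_image (Prod.mk_right_injective 1).injOn,
    prod_image hinj, H]
  congr 1
  exact prod_congr rfl fun b hb => hook_add_one_add_one lam hb

lemma hook_one_of_le_length {j : ℕ} (hj : 2 ≤ j) (hjl : j ≤ lam.length) :
    lam.hook (1, j) = lam.part 1 + lam.part j := by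
  have := part_add_sub_le lam le_rfl (by omega : 1 ≤ j) hjl
  have := part_pos lam (by omega) hjl
  rw [hook_eq lam ((mem_cells lam).mpr ⟨le_rfl, by omega, by omega⟩)]
  have : {a ∈ Ioc 1 (j - 1) | j ≤ a + lam.part a} = Ioc 1 (j - 1) := by
    refine filter_true_of_mem fun a ha => ?_
    rw [mem_Ioc] at ha
    have := part_add_sub_le lam (by omega : 1 ≤ a) (by omega : a ≤ j) hjl
    omega
  rw [this, Nat.card_Ioc]
  omega

def numPartsGt (v : ℕ) : ℕ := #{w ∈ lam.partSet | v < w}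

lemma numPartsGt_eq (v : ℕ) : lam.numPartsGt v = #{i ∈ Icc 1 lam.length | v < lam.part i} := by
  rw [numPartsGt, partSet_eq_image, filter_image,
    card_image_of_injOn ((injOn_part lam).mono (filter_subset _ _))]

lemma lt_part_iff_le_numPartsGt {v i : ℕ} (h1 : 1 ≤ i) (h2 : i ≤ lam.length) :
    v < lam.part i ↔ i ≤ lam.numPartsGt v := by
  rw [numPartsGt_eq]
  constructor
  · intro hv
    calc i = #(Icc 1 i) := by simp
      _ ≤ _ := card_le_card fun k hk => by
        rw [mem_Icc] at hk
        have := part_add_sub_le lam hk.1 hk.2 h2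
        simp only [mem_filter, mem_Icc]
        omega
  · intro hi
    by_contra hv
    have : #{k ∈ Icc 1 lam.length | v < lam.part k} ≤ #(Icc 1 (i - 1)) :=
      card_le_card fun k hk => by
        simp only [mem_filter, mem_Icc] at hk ⊢
        by_contra hki
        have := part_add_sub_le lam h1 (by omega : i ≤ k) hk.1.2
        omega
    simp only [Nat.card_Icc] at this
    omega

lemma numPartsGt_le_length (v : ℕ) : lam.numPartsGt v ≤ lam.length :=
  (card_filter_le _ _).trans (card_partSet lam).le

lemma length_le_add_numPartsGt (v : ℕ) : lam.length ≤ v + lam.numPartsGt v := by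
  have hle : #{w ∈ lam.partSet | ¬ v < w} ≤ #(Icc 1 v) := card_le_card fun w hw => by
    obtain ⟨hw, hvw⟩ := mem_filter.mp hw
    have := ((mem_partSet_iff_pos lam).mp hw).1
    rw [mem_Icc]
    omega
  have := card_filter_add_card_filter_not (s := lam.partSet) (fun w => v < w)
  rw [card_partSet, Nat.card_Icc] at *
  unfold numPartsGt
  omega

lemma add_numPartsGt_le {v : ℕ} (hv : v < lam.part 1) : v + lam.numPartsGt v ≤ lam.part 1 := by
  have hl := le_length_of_part_pos lam (by omega : 0 < lam.part 1)
  have hN := (lt_part_iff_le_numPartsGt lam le_rfl hl).mp hv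
  have hNv := (lt_part_iff_le_numPartsGt lam hN (numPartsGt_le_length lam v)).mpr le_rfl
  have := part_add_sub_le lam le_rfl hN (numPartsGt_le_length lam v)
  omega

lemma add_numPartsGt_lt {v v' : ℕ} (hv' : v' ∉ lam.partSet) (hlt : v < v') :
    v + lam.numPartsGt v < v' + lam.numPartsGt v' := by
  have hsplit : {w ∈ lam.partSet | v < w} =
      {w ∈ lam.partSet | v' < w} ∪ {w ∈ lam.partSet | v < w ∧ w < v'} := by
    ext w
    simp only [mem_filter, mem_union]
    constructor
    · rintro ⟨hw, hvw⟩
      rcases lt_trichotomy w v' with h | rfl | h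
      · exact Or.inr ⟨hw, hvw, h⟩
      · exact absurd hw hv'
      · exact Or.inl ⟨hw, h⟩
    · rintro (⟨hw, h⟩ | ⟨hw, h, -⟩) <;> exact ⟨hw, by omega⟩
  have hdisj : Disjoint {w ∈ lam.partSet | v' < w} {w ∈ lam.partSet | v < w ∧ w < v'} :=
    disjoint_filter.mpr fun _ _ h1 h2 => by omega
  have hsmall : #{w ∈ lam.partSet | v < w ∧ w < v'} ≤ #(Ioo v v') :=
    card_le_card fun w hw => by
      rw [mem_filter] at hw
      exact mem_Ioo.mpr hw.2
  rw [Nat.card_Ioo] at hsmall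
  unfold numPartsGt
  rw [hsplit, card_union_of_disjoint hdisj]
  omega

lemma hook_one_add_numPartsGt {v : ℕ} (hv : v < lam.part 1) (hvV : v ∉ lam.partSet) :
    lam.hook (1, v + lam.numPartsGt v + 1) = lam.part 1 - v := by
  set N := lam.numPartsGt v
  have hl := le_length_of_part_pos lam (by omega : 0 < lam.part 1)
  have hNl : N ≤ lam.length := numPartsGt_le_length lam v
  have hN1 : 1 ≤ N := (lt_part_iff_le_numPartsGt lam le_rfl hl).mp hv
  have hvN : v < lam.part N := (lt_part_iff_le_numPartsGt lam hN1 hNl).mpr le_rfl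
  have hNv := add_numPartsGt_le lam hv
  have hlN := length_le_add_numPartsGt lam v
  rw [hook_eq lam ((mem_cells lam).mpr ⟨le_rfl, by omega, by omega⟩),
    part_eq_zero lam (by omega : lam.length < v + N + 1)]
  have hleg : {a ∈ Ioc 1 (v + N + 1 - 1) | v + N + 1 ≤ a + lam.part a} = Ioc 1 N := by
    ext a
    simp only [mem_filter, mem_Ioc]
    constructor
    · rintro ⟨⟨ha1, ha2⟩, ha3⟩
      refine ⟨ha1, not_lt.mp fun haN => ?_⟩
      rcases le_or_gt a lam.length with hal | hal
      · have hNv' : ¬ v < lam.part (N + 1) := by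
          rw [lt_part_iff_le_numPartsGt lam (by omega) (by omega)]
          omega
        have : lam.part (N + 1) ≠ v := fun h =>
          hvV (h ▸ part_mem_partSet lam (by omega) (by omega))
        have := part_add_sub_le lam (by omega : 1 ≤ N + 1) haN hal
        omega
      · rw [part_eq_zero lam hal] at ha3
        omega
    · rintro ⟨ha1, ha2⟩
      have := part_add_sub_le lam (by omega : 1 ≤ a) ha2 hNl
      omega
  rw [hleg, Nat.card_Ioc]
  omega

lemma tail_partSet_eq_filter :
    lam.tail.partSet = {v ∈ range (lam.part 1) | v ∈ lam.partSet} := by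
  ext v
  rw [mem_tail_partSet, mem_filter, mem_range, and_comm]

lemma prod_hook_one_of_le_length (hl : 1 ≤ lam.length) :
    ∏ j ∈ Ioc 1 lam.length, lam.hook (1, j) = ∏ v ∈ lam.tail.partSet, (lam.part 1 + v) := by
  rw [prod_partSet, tail_length]
  refine prod_nbij' (· - 1) (· + 1) ?_ ?_ ?_ ?_ ?_ <;> intro j hj <;>
    simp only [mem_Ioc, mem_Icc] at hj ⊢
  · omega
  · omega
  · omega
  · omega
  · rw [hook_one_of_le_length lam (by omega) hj.2, tail_part lam (by omega),
      Nat.sub_add_cancel (by omega : 1 ≤ j)]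

lemma prod_hook_one_of_length_lt (hl : 1 ≤ lam.length) :
    ∏ j ∈ Ioc lam.length (1 + lam.part 1), lam.hook (1, j) =
      ∏ v ∈ range (lam.part 1) with v ∉ lam.partSet, (lam.part 1 - v) := by
  set D := {v ∈ range (lam.part 1) | v ∉ lam.partSet}
  have hD : ∀ v ∈ D, v < lam.part 1 ∧ v ∉ lam.partSet := fun v hv => by
    simpa only [D, mem_filter, mem_range] using hv
  have hinj : Set.InjOn (fun v => v + lam.numPartsGt v + 1) D := by
    intro v hv v' hv' h
    simp only at h
    rcases lt_trichotomy v v' with hlt | heq | hlt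
    · exact absurd h (by have := add_numPartsGt_lt lam (hD v' hv').2 hlt; omega)
    · exact heq
    · exact absurd h (by have := add_numPartsGt_lt lam (hD v hv).2 hlt; omega)
  have hcardD : #D + (lam.length - 1) = lam.part 1 := by
    rw [← tail_length, ← card_partSet, tail_partSet_eq_filter, add_comm,
      card_filter_add_card_filter_not, card_range]
  have himage : D.image (fun v => v + lam.numPartsGt v + 1) = Ioc lam.length (1 + lam.part 1) := by
    refine eq_of_subset_of_card_le (fun j hj => ?_) ?_
    · obtain ⟨v, hv, rfl⟩ := mem_image.mp hj
      have := add_numPartsGt_le lam (hD v hv).1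
      have := length_le_add_numPartsGt lam v
      rw [mem_Ioc]
      omega
    · have := part_add_sub_le lam le_rfl hl le_rfl
      have := part_pos lam hl le_rfl
      rw [card_image_of_injOn hinj, Nat.card_Ioc]
      omega
  rw [← himage, prod_image hinj]
  exact prod_congr rfl fun v hv => hook_one_add_numPartsGt lam (hD v hv).1 (hD v hv).2

lemma prod_hook_one (hl : 1 ≤ lam.length) :
    (∏ j ∈ Ioc 1 (1 + lam.part 1), lam.hook (1, j)) *
        ∏ v ∈ lam.tail.partSet, (lam.part 1 - v) =
      (lam.part 1)! * ∏ v ∈ lam.tail.partSet, (lam.part 1 + v) := by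
  have := part_add_sub_le lam le_rfl hl le_rfl
  have := part_pos lam hl le_rfl
  have hfactorial : (∏ v ∈ range (lam.part 1) with v ∉ lam.partSet, (lam.part 1 - v)) *
      ∏ v ∈ lam.tail.partSet, (lam.part 1 - v) = (lam.part 1)! := by
    rw [tail_partSet_eq_filter, prod_filter_not_mul_prod_filter,
      ← Nat.descFactorial_eq_prod_range, Nat.descFactorial_self]
  rw [← Ioc_union_Ioc_eq_Ioc hl (by omega), prod_union (Ioc_disjoint_Ioc_of_le le_rfl),
    prod_hook_one_of_le_length lam hl, prod_hook_one_of_length_lt lam hl, mul_assoc, hfactorial,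
    mul_comm]

lemma partSet_eq_insert (hl : 1 ≤ lam.length) :
    lam.partSet = insert (lam.part 1) lam.tail.partSet := by
  ext w
  rw [mem_insert, mem_tail_partSet]
  constructor
  · intro hw
    obtain ⟨i, hi1, hi, rfl⟩ := (mem_partSet lam).mp hw
    rcases hi1.eq_or_lt with rfl | hi1
    · exact Or.inl rfl
    · exact Or.inr ⟨hw, part_lt_part lam le_rfl hi1 hi⟩
  · rintro (rfl | ⟨hw, -⟩)
    exacts [part_mem_partSet lam le_rfl hl, hw]

lemma part_one_notMem_tail_partSet : lam.part 1 ∉ lam.tail.partSet := fun h =>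
  lt_irrefl _ ((mem_tail_partSet lam).mp h).2

end StrictPartition

lemma choose_two_sub_choose_two (c w : ℕ) :
    (c.choose 2 - w.choose 2 : ℚ) = (c - w) * (c + w - 1) / 2 := by
  rw [Nat.cast_choose_two, Nat.cast_choose_two]
  ring

lemma choose_two_sub_choose_two_ne_zero {c w : ℕ} (hw : w ≠ c) (h : 1 < c + w) :
    (c.choose 2 - w.choose 2 : ℚ) ≠ 0 := by
  rw [choose_two_sub_choose_two]
  have : (c : ℚ) - w ≠ 0 := sub_ne_zero.mpr (by exact_mod_cast hw.symm)
  have : (c : ℚ) + w - 1 ≠ 0 := by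
    have : (1 : ℚ) < c + w := by exact_mod_cast h
    linarith
  positivity

lemma prod_div_prod_succ {S : Finset ℕ} {f : ℕ → ℚ} (hf : ∀ u ∈ S, f (u + 1) ≠ 0) :
    ∏ u ∈ S, f u / f (u + 1) =
      (∏ w ∈ S \ S.image (· + 1), f w) / ∏ w ∈ S.image (· + 1) \ S, f w := by
  have hinter : ∏ w ∈ S ∩ S.image (· + 1), f w ≠ 0 := prod_ne_zero_iff.mpr fun w hw => by
    obtain ⟨u, hu, rfl⟩ := mem_image.mp (mem_inter.mp hw).2
    exact hf u hu
  rw [prod_div_distrib, ← prod_image (f := f) (add_left_injective 1).injOn,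
    ← prod_sdiff (inter_subset_left : S ∩ S.image (· + 1) ⊆ S),
    ← prod_sdiff (inter_subset_right : S ∩ S.image (· + 1) ⊆ S.image (· + 1)),
    sdiff_inter_self_left, sdiff_inter_self_right, mul_div_mul_right _ _ hinter]

lemma prod_erase_div_prod_succ {V : Finset ℕ} {p : ℕ} {f : ℕ → ℚ} (hp : p ∈ V)
    (hp1 : p + 1 ∉ V) (hfp : f p ≠ 0) (hf : ∀ u ∈ V, u ≠ p → f (u + 1) ≠ 0) :
    ∏ u ∈ V.erase p, f u / f (u + 1) =
      (∏ w ∈ V \ V.image (· + 1), f w) /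
        (f p * ∏ w ∈ (V.image (· + 1) \ V).erase (p + 1), f w) := by
  have houter : V.erase p \ (V.erase p).image (· + 1) = (V \ V.image (· + 1)).erase p := by
    ext w
    simp only [mem_sdiff, mem_erase, mem_image]
    grind
  rw [prod_div_prod_succ fun u hu => hf u (mem_of_mem_erase hu) (ne_of_mem_erase hu), houter]
  by_cases hpimage : p ∈ V.image (· + 1)
  · have hinner : (V.erase p).image (· + 1) \ V.erase p =
        insert p ((V.image (· + 1) \ V).erase (p + 1)) := by
      ext w
      simp only [mem_sdiff, mem_erase, mem_image, mem_insert] at hpimage ⊢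
      grind
    rw [hinner, prod_insert (by simp [hp]), erase_eq_of_notMem (by simp [hpimage])]
  · have hinner :
        (V.erase p).image (· + 1) \ V.erase p = (V.image (· + 1) \ V).erase (p + 1) := by
      ext w
      simp only [mem_sdiff, mem_erase, mem_image] at hpimage ⊢
      grind
    rw [hinner, ← mul_prod_erase _ _ (mem_sdiff.mpr ⟨hp, hpimage⟩), mul_div_mul_left _ _ hfp]

noncomputable def hookProduct (S : Finset ℕ) : ℚ :=
  ∏ v ∈ S, ((v ! : ℚ) * ∏ u ∈ S with u < v, ((v + u : ℚ) / (v - u)))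

lemma hookProduct_empty : hookProduct ∅ = 1 := prod_empty

lemma hookProduct_pos (S : Finset ℕ) : 0 < hookProduct S :=
  prod_pos fun v _ => mul_pos (Nat.cast_pos.mpr v.factorial_pos) <| prod_pos fun u hu => by
    have : (u : ℚ) < v := by exact_mod_cast (mem_filter.mp hu).2
    have : (0 : ℚ) ≤ u := u.cast_nonneg
    exact div_pos (by linarith) (by linarith)

lemma hookProduct_insert {a : ℕ} {S : Finset ℕ} (ha : a ∉ S) :
    hookProduct (insert a S) =
      a ! * (∏ u ∈ S, ((a + u : ℚ) / |(a : ℚ) - u|)) * hookProduct S := by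
  have hfactor : ∀ v ∈ S, (v ! : ℚ) * ∏ u ∈ insert a S with u < v, ((v + u : ℚ) / (v - u)) =
      (if a < v then ((v + a : ℚ) / (v - a)) else 1) *
        ((v ! : ℚ) * ∏ u ∈ S with u < v, ((v + u : ℚ) / (v - u))) := by
    intro v _
    rw [filter_insert]
    split_ifs
    · rw [prod_insert (fun h => ha (mem_filter.mp h).1)]
      ring
    · ring
  have hsplit : ∏ u ∈ S, ((a + u : ℚ) / |(a : ℚ) - u|) =
      (∏ u ∈ S with u < a, ((a + u : ℚ) / (a - u))) *
        ∏ v ∈ S with a < v, ((v + a : ℚ) / (v - a)) := by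
    rw [← prod_filter_mul_prod_filter_not S (· < a)]
    congr 1
    · refine prod_congr rfl fun u hu => ?_
      have : (u : ℚ) < a := by exact_mod_cast (mem_filter.mp hu).2
      rw [abs_of_pos (by linarith)]
    · have hfilter : {u ∈ S | ¬ u < a} = {v ∈ S | a < v} :=
        filter_congr fun u hu => by have : u ≠ a := fun h => ha (h ▸ hu); omega
      rw [hfilter]
      refine prod_congr rfl fun u hu => ?_
      have : (a : ℚ) < u := by exact_mod_cast (mem_filter.mp hu).2
      rw [abs_of_neg (by linarith)]
      ring
  rw [hookProduct, hookProduct, prod_insert ha, prod_congr rfl hfactor, prod_mul_distrib, filter_insert,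
    if_neg (lt_irrefl a), ← prod_filter, hsplit]
  ring

lemma hookProduct_insert_zero {S : Finset ℕ} (h : 0 ∉ S) :
    hookProduct (insert 0 S) = hookProduct S := by
  rw [hookProduct_insert h, Nat.factorial_zero, Nat.cast_one, one_mul, prod_eq_one, one_mul]
  intro u hu
  have : u ≠ 0 := fun h' => h (h' ▸ hu)
  have : (u : ℚ) ≠ 0 := by exact_mod_cast this
  rw [Nat.cast_zero, zero_sub, abs_neg, zero_add, abs_of_nonneg (Nat.cast_nonneg _), div_self this]

lemma pair_factor_div_pair_factor_succ {p u : ℕ} (hup : u ≠ p) (hup1 : u ≠ p + 1) :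
    ((p + u : ℚ) / |(p : ℚ) - u|) / (((p + 1 : ℕ) + u : ℚ) / |((p + 1 : ℕ) : ℚ) - u|) =
      ((p + 1).choose 2 - u.choose 2 : ℚ) / ((p + 1).choose 2 - (u + 1).choose 2) := by
  rw [choose_two_sub_choose_two, choose_two_sub_choose_two]
  push_cast
  rw [show (p : ℚ) + 1 + u - 1 = p + u by ring, show (p : ℚ) + 1 - (u + 1) = p - u by ring,
    show (p : ℚ) + 1 + (u + 1) - 1 = p + u + 1 by ring]
  have : (p : ℚ) - u ≠ 0 := sub_ne_zero.mpr (by exact_mod_cast hup.symm)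
  have : (p : ℚ) + 1 - u ≠ 0 := sub_ne_zero.mpr (by exact_mod_cast hup1.symm)
  have : (p : ℚ) + u ≠ 0 := by exact_mod_cast (show p + u ≠ 0 by omega)
  have : (p : ℚ) + u + 1 ≠ 0 := by positivity
  have : (p : ℚ) + 1 + u ≠ 0 := by positivity
  rcases lt_or_gt_of_ne hup with h | h
  · have : (u : ℚ) < p := by exact_mod_cast h
    rw [abs_of_pos (by linarith), abs_of_pos (by linarith)]
    field_simp
    ring
  · have : (p : ℚ) + 1 < u := by exact_mod_cast (show p + 1 < u by omega)
    rw [abs_of_neg (by linarith), abs_of_neg (by linarith)]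
    field_simp
    ring

lemma hookProduct_insert_div_hookProduct_insert_succ {p : ℕ} {S : Finset ℕ} (hp : p ∉ S)
    (hp1 : p + 1 ∉ S) :
    hookProduct (insert p S) / hookProduct (insert (p + 1) S) =
      (∏ u ∈ S, (((p + 1).choose 2 - u.choose 2 : ℚ) /
        ((p + 1).choose 2 - (u + 1).choose 2))) / (p + 1) := by
  have hne : ∀ u ∈ S, u ≠ p ∧ u ≠ p + 1 := fun u hu =>
    ⟨fun h => hp (h ▸ hu), fun h => hp1 (h ▸ hu)⟩
  rw [← prod_congr rfl fun u hu => pair_factor_div_pair_factor_succ (hne u hu).1 (hne u hu).2,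
    prod_div_distrib, hookProduct_insert hp, hookProduct_insert hp1, Nat.factorial_succ]
  have hS := (hookProduct_pos S).ne'
  have hden : ∏ u ∈ S, (((p + 1 : ℕ) + u : ℚ) / |((p + 1 : ℕ) : ℚ) - u|) ≠ 0 :=
    prod_ne_zero_iff.mpr fun u hu => div_ne_zero (by positivity)
      (abs_ne_zero.mpr (sub_ne_zero.mpr (by exact_mod_cast (hne u hu).2.symm)))
  have : ((p ! : ℕ) : ℚ) ≠ 0 := by positivity
  field_simp
  push_cast
  ring

namespace StrictPartition

variable (lam : StrictPartition)

theorem H_eq_hookProduct : (lam.H : ℚ) = hookProduct lam.partSet := by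
  induction hn : lam.length generalizing lam with
  | zero =>
    have hcells : lam.cells = ∅ := eq_empty_of_forall_notMem fun ⟨i, j⟩ h => by
      rw [mem_cells, part_eq_zero lam (by omega)] at h
      omega
    rw [card_eq_zero.mp ((card_partSet lam).trans hn), hookProduct_empty, H, hcells, prod_empty,
      Nat.cast_one]
  | succ n ih =>
    have hl : 1 ≤ lam.length := by omega
    set a := lam.part 1
    have hsub : ∀ v ∈ lam.tail.partSet, ((a - v : ℕ) : ℚ) = |(a : ℚ) - v| := by
      intro v hv
      have hva := ((mem_tail_partSet lam).mp hv).2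
      have : (v : ℚ) < a := by exact_mod_cast hva
      rw [Nat.cast_sub hva.le, abs_of_pos (by linarith)]
    have hne : ∏ v ∈ lam.tail.partSet, |(a : ℚ) - v| ≠ 0 :=
      prod_ne_zero_iff.mpr fun v hv => by
        rw [← hsub v hv, Nat.cast_ne_zero]
        exact (Nat.sub_pos_of_lt ((mem_tail_partSet lam).mp hv).2).ne'
    have hrow : ((∏ j ∈ Ioc 1 (1 + a), lam.hook (1, j) : ℕ) : ℚ) =
        a ! * ∏ v ∈ lam.tail.partSet, ((a + v : ℚ) / |(a : ℚ) - v|) := by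
      rw [prod_div_distrib, mul_div_assoc', eq_div_iff hne, ← prod_congr rfl hsub]
      exact_mod_cast prod_hook_one lam hl
    rw [H_eq_mul_H_tail, Nat.cast_mul, hrow, ih lam.tail (by rw [tail_length]; omega),
      partSet_eq_insert lam hl, hookProduct_insert (part_one_notMem_tail_partSet lam)]

lemma card_filter_row {i : ℕ} (hi : 1 ≤ i) : #{b ∈ lam.cells | b.1 = i} = lam.part i := by
  have : {b ∈ lam.cells | b.1 = i} = (Ioc i (i + lam.part i)).image (Prod.mk i) := by
    ext ⟨a, c⟩
    simp only [mem_filter, mem_image, mem_Ioc, mem_cells, Prod.mk.injEq]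
    constructor
    · rintro ⟨⟨-, hac, hc⟩, rfl⟩
      exact ⟨c, ⟨hac, hc⟩, rfl, rfl⟩
    · rintro ⟨c, ⟨hac, hc⟩, rfl, rfl⟩
      exact ⟨⟨hi, hac, hc⟩, rfl⟩
  rw [this, card_image_of_injective _ (Prod.mk_right_injective i), Nat.card_Ioc]
  omega

lemma exists_part_eq (a : ℕ → ℕ) (n : ℕ) (hzero : ∀ i, n < i → a i = 0)
    (hanti : ∀ i j, 1 ≤ i → i < j → 0 < a j → a j < a i) :
    ∃ mu : StrictPartition, ∀ i, 1 ≤ i → mu.part i = a i := by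
  induction n with
  | zero => exact ⟨empty, fun i hi => (hzero i hi).symm⟩
  | succ n ih =>
    by_cases hn : a (n + 1) = 0
    · refine ih fun i hi => ?_
      rcases (show n + 1 < i ∨ i = n + 1 by omega) with hi | rfl
      exacts [hzero i hi, hn]
    have hpos : ∀ k, k < n + 1 → 0 < a (k + 1) := fun k hk => by
      rcases (show k < n ∨ k = n by omega) with hk | rfl
      · exact (hanti _ _ (by omega) (by omega) (Nat.pos_of_ne_zero hn)).trans' (by omega)
      · exact Nat.pos_of_ne_zero hn
    refine ⟨⟨(List.range (n + 1)).map (fun k => a (k + 1)), ?_, ?_⟩, fun i hi => ?_⟩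
    · simp only [List.mem_map, List.mem_range]
      rintro _ ⟨k, hk, rfl⟩
      exact hpos k hk
    · refine List.pairwise_map.mpr (List.pairwise_lt_range.imp_of_mem fun {k l} _ hl hkl => ?_)
      exact hanti _ _ (by omega) (by omega) (hpos l (List.mem_range.mp hl))
    · show List.getD _ (i - 1) 0 = a i
      rcases lt_or_ge (i - 1) (n + 1) with h | h
      · rw [List.getD_eq_getElem _ _ (by simpa using h), List.getElem_map, List.getElem_range,
          Nat.sub_add_cancel hi]
      · rw [List.getD_eq_default _ _ (by simpa using h), hzero i (by omega)]

def AddsBoxInRow (lam mu : StrictPartition) (r : ℕ) : Prop :=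
  ∀ i, 1 ≤ i → mu.part i = lam.part i + if i = r then 1 else 0

def innerSet : Finset ℕ := insert 1 (lam.partSet.image (· + 1) \ lam.partSet)

def outerSet : Finset ℕ := lam.partSet \ lam.partSet.image (· + 1)

lemma box_notMem_cells (r : ℕ) : (r, r + lam.part r + 1) ∉ lam.cells := by
  rw [mem_cells]
  omega

lemma content_box (r : ℕ) : content (r, r + lam.part r + 1) = lam.part r + 1 := by
  simp only [content]
  omega

section AddsBoxInRow

variable {lam} {mu : StrictPartition} {r : ℕ}

lemma addsBoxInRow_of_cells_eq_insert {b : ℕ × ℕ} (hb : b ∉ lam.cells)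
    (h : mu.cells = insert b lam.cells) :
    1 ≤ b.1 ∧ b.2 = b.1 + lam.part b.1 + 1 ∧ AddsBoxInRow lam mu b.1 := by
  obtain ⟨r, s⟩ := b
  have hmu : (r, s) ∈ mu.cells := h ▸ mem_insert_self _ _
  have hr : 1 ≤ r := ((mem_cells mu).mp hmu).1
  have hadds : AddsBoxInRow lam mu r := fun i hi => by
    rw [← card_filter_row mu hi, ← card_filter_row lam hi, h, filter_insert]
    by_cases hri : r = i
    · subst hri
      rw [if_pos rfl, if_pos rfl, card_insert_of_notMem fun h' => hb (mem_filter.mp h').1]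
    · rw [if_neg hri, if_neg (Ne.symm hri), add_zero]
  refine ⟨hr, ?_, hadds⟩
  have := (mem_cells mu).mp hmu
  rw [hadds r hr, if_pos rfl] at this
  have := mt (mem_cells lam).mpr hb
  simp only at this ⊢
  omega

namespace AddsBoxInRow

lemma cells_eq (h : AddsBoxInRow lam mu r) (hr : 1 ≤ r) :
    mu.cells = insert (r, r + lam.part r + 1) lam.cells := by
  ext ⟨i, j⟩
  rw [mem_insert, mem_cells, mem_cells, Prod.mk.injEq]
  constructor
  · rintro ⟨hi, hij, hj⟩
    rw [h i hi] at hj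
    split_ifs at hj with hir
    · subst hir
      omega
    · omega
  · rintro (⟨rfl, rfl⟩ | ⟨hi, hij, hj⟩)
    · rw [h i hr, if_pos rfl]
      omega
    · rw [h i hi]
      omega

lemma succ_notMem_partSet (h : AddsBoxInRow lam mu r) (hr : 1 ≤ r) :
    lam.part r + 1 ∉ lam.partSet := by
  intro hmem
  obtain ⟨t, ht, -, hpt⟩ := (mem_partSet lam).mp hmem
  have htr : t ≠ r := by rintro rfl; omega
  have hmut : mu.part t = mu.part r := by rw [h t ht, h r hr, if_neg htr, if_pos rfl, hpt]
  exact htr (eq_of_part_eq mu ht hr hmut (by rw [h t ht, if_neg htr]; omega))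

lemma partSet_eq (h : AddsBoxInRow lam mu r) (hr : 1 ≤ r) :
    mu.partSet = insert (lam.part r + 1) (lam.partSet.erase (lam.part r)) := by
  ext w
  simp only [mem_insert, mem_erase, mem_partSet_iff_pos]
  constructor
  · rintro ⟨hw, i, hi, rfl⟩
    rw [h i hi] at hw ⊢
    split_ifs at hw ⊢ with hir
    · exact Or.inl (by rw [hir])
    · rw [add_zero] at hw ⊢
      exact Or.inr ⟨fun he => hir (eq_of_part_eq lam hi hr he hw), hw, i, hi, rfl⟩
  · rintro (rfl | ⟨hne, hw, i, hi, rfl⟩)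
    · exact ⟨by omega, r, hr, by rw [h r hr, if_pos rfl]⟩
    · have hir : i ≠ r := by rintro rfl; exact hne rfl
      exact ⟨hw, i, hi, by rw [h i hi, if_neg hir, add_zero]⟩

lemma H_div_H (h : AddsBoxInRow lam mu r) (hr : 1 ≤ r) :
    (lam.H : ℚ) / mu.H =
      (∏ u ∈ lam.partSet.erase (lam.part r), (((lam.part r + 1).choose 2 - u.choose 2 : ℚ) /
        ((lam.part r + 1).choose 2 - (u + 1).choose 2))) / (lam.part r + 1) := by
  have hp1 := h.succ_notMem_partSet hr
  have hlam : hookProduct (insert (lam.part r) (lam.partSet.erase (lam.part r))) = lam.H := by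
    by_cases hp : lam.part r ∈ lam.partSet
    · rw [insert_erase hp, H_eq_hookProduct]
    · have h0 : lam.part r = 0 := by
        by_contra h0
        exact hp ((mem_partSet_iff_pos lam).mpr ⟨Nat.pos_of_ne_zero h0, r, hr, rfl⟩)
      rw [erase_eq_of_notMem hp, h0, hookProduct_insert_zero (zero_notMem_partSet lam),
        H_eq_hookProduct]
  rw [H_eq_hookProduct mu, h.partSet_eq hr, ← hlam,
    hookProduct_insert_div_hookProduct_insert_succ (notMem_erase _ _)
      fun h' => hp1 (mem_of_mem_erase h')]

lemma H_div_H_of_part_eq_zero (h : AddsBoxInRow lam mu r) (hr : 1 ≤ r) (hp : lam.part r = 0) :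
    (lam.H : ℚ) / mu.H =
      (∏ w ∈ lam.outerSet, (((lam.part r + 1).choose 2 : ℚ) - w.choose 2)) /
        ∏ w ∈ lam.innerSet.erase (lam.part r + 1),
          (((lam.part r + 1).choose 2 : ℚ) - w.choose 2) := by
  have h1 : 1 ∉ lam.partSet.image (· + 1) \ lam.partSet := fun h1 => by
    obtain ⟨u, hu, hu1⟩ := mem_image.mp (mem_sdiff.mp h1).1
    exact zero_notMem_partSet lam (by rwa [show u = 0 by omega] at hu)
  rw [h.H_div_H hr, hp, erase_eq_of_notMem (zero_notMem_partSet lam)]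
  simp only [Nat.cast_zero, zero_add, div_one]
  rw [prod_div_prod_succ, outerSet, innerSet, erase_insert h1]
  intro u hu
  have := ((mem_partSet_iff_pos lam).mp hu).1
  exact choose_two_sub_choose_two_ne_zero (by omega) (by omega)

lemma H_div_H_of_part_ne_zero (h : AddsBoxInRow lam mu r) (hr : 1 ≤ r) (hp : lam.part r ≠ 0) :
    (lam.H : ℚ) / mu.H =
      1 / 2 * (∏ w ∈ lam.outerSet, (((lam.part r + 1).choose 2 : ℚ) - w.choose 2)) /
        ∏ w ∈ lam.innerSet.erase (lam.part r + 1),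
          (((lam.part r + 1).choose 2 : ℚ) - w.choose 2) := by
  rw [h.H_div_H hr]
  set p := lam.part r
  have hpV : p ∈ lam.partSet :=
    (mem_partSet_iff_pos lam).mpr ⟨Nat.pos_of_ne_zero hp, r, hr, rfl⟩
  have h1 : 1 ∉ (lam.partSet.image (· + 1) \ lam.partSet).erase (p + 1) := fun h1 => by
    obtain ⟨u, hu, hu1⟩ := mem_image.mp (mem_sdiff.mp (mem_of_mem_erase h1)).1
    exact zero_notMem_partSet lam (by rwa [show u = 0 by omega] at hu)
  have hchoose_p : ((p + 1).choose 2 - p.choose 2 : ℚ) = p := by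
    rw [choose_two_sub_choose_two]; push_cast; ring
  have hchoose_one : ((p + 1).choose 2 - (1 : ℕ).choose 2 : ℚ) = (p + 1) * p / 2 := by
    rw [choose_two_sub_choose_two]; push_cast; ring
  have hne : ∀ w ∈ (lam.partSet.image (· + 1) \ lam.partSet).erase (p + 1),
      ((p + 1).choose 2 - w.choose 2 : ℚ) ≠ 0 := fun w hw => by
    obtain ⟨hwp, hw⟩ := mem_erase.mp hw
    obtain ⟨u, hu, rfl⟩ := mem_image.mp (mem_sdiff.mp hw).1
    exact choose_two_sub_choose_two_ne_zero hwp (by omega)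
  have hB := prod_ne_zero_iff.mpr hne
  have hp' : (p : ℚ) ≠ 0 := by exact_mod_cast hp
  rw [prod_erase_div_prod_succ hpV (h.succ_notMem_partSet hr) (by rwa [hchoose_p])
      fun u _ hu => choose_two_sub_choose_two_ne_zero (by omega) (by omega),
    innerSet, erase_insert_of_ne (by omega), prod_insert h1, hchoose_p, hchoose_one, outerSet]
  field_simp

end AddsBoxInRow

lemma exists_addsBoxInRow_of_add_one_notMem (hr1 : 1 ≤ r) (hr : r ≤ lam.length)
    (h : lam.part r + 1 ∉ lam.partSet) : ∃ mu, AddsBoxInRow lam mu r := by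
  refine exists_part_eq _ lam.length (fun i hi => ?_) (fun i j hi hij hj => ?_)
  · rw [part_eq_zero lam hi, if_neg (by omega)]
  · have hjl : j ≤ lam.length := by
      by_cases hjr : j = r
      · omega
      · rw [if_neg hjr] at hj
        exact le_length_of_part_pos lam (by omega)
    have := part_lt_part lam hi hij hjl
    have := part_mem_partSet lam hi (by omega)
    have : lam.part i ≠ lam.part r + 1 := fun he => h (he ▸ part_mem_partSet lam hi (by omega))
    split_ifs at hj ⊢ <;> subst_vars <;> omega

lemma exists_addsBoxInRow_of_sub_one_notMem (hr1 : 1 ≤ r) (hr : r ≤ lam.length)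
    (h : lam.part r - 1 ∉ lam.partSet) : ∃ mu, AddsBoxInRow mu lam r := by
  have hpos := part_pos lam hr1 hr
  obtain ⟨mu, hmu⟩ := exists_part_eq (fun i => lam.part i - if i = r then 1 else 0) lam.length
    (fun i hi => by simp only [part_eq_zero lam hi, zero_tsub])
    (fun i j hi hij hj => by
      have hjl : j ≤ lam.length := le_length_of_part_pos lam (by omega)
      have := part_lt_part lam hi hij hjl
      have : lam.part j ≠ lam.part r - 1 := fun he =>
        h (he ▸ part_mem_partSet lam (by omega) hjl)
      split_ifs at hj ⊢ <;> subst_vars <;> omega)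
  refine ⟨mu, fun i hi => ?_⟩
  rw [hmu i hi]
  split_ifs with hir
  · subst hir
    omega
  · omega

end AddsBoxInRow

lemma innerContents_eq : lam.innerContents = lam.innerSet := by
  ext w
  simp only [innerContents, innerSet, coe_insert, Set.mem_insert_iff, Set.mem_image, mem_coe,
    mem_sdiff, mem_image, addableCells, Set.mem_ofPred_eq]
  constructor
  · rintro (rfl | ⟨b, ⟨hb, mu, hmu⟩, rfl⟩)
    · exact Or.inl rfl
    obtain ⟨hr, hb2, hadds⟩ := addsBoxInRow_of_cells_eq_insert hb hmu
    obtain ⟨r, s⟩ := b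
    simp only at hr hb2 hadds
    subst hb2
    rw [content_box]
    rcases Nat.eq_zero_or_pos (lam.part r) with h0 | hpos
    · exact Or.inl (by rw [h0])
    · exact Or.inr ⟨⟨lam.part r, (mem_partSet_iff_pos lam).mpr ⟨hpos, r, hr, rfl⟩, rfl⟩,
        hadds.succ_notMem_partSet hr⟩
  · rintro (rfl | ⟨⟨u, hu, rfl⟩, hnot⟩)
    · exact Or.inl rfl
    obtain ⟨r, hr1, hr, rfl⟩ := (mem_partSet lam).mp hu
    obtain ⟨mu, hadds⟩ := exists_addsBoxInRow_of_add_one_notMem hr1 hr hnot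
    exact Or.inr ⟨_, ⟨box_notMem_cells lam r, mu, hadds.cells_eq hr1⟩, content_box lam r⟩

lemma outerContents_eq : lam.outerContents = lam.outerSet := by
  ext w
  simp only [outerContents, outerSet, Set.mem_image, mem_coe, mem_sdiff, mem_image,
    removableCells, Set.mem_ofPred_eq, not_exists, not_and]
  constructor
  · rintro ⟨b, ⟨hb, mu, hmu⟩, rfl⟩
    have hbmu : b ∉ mu.cells := hmu ▸ notMem_erase b lam.cells
    obtain ⟨hr, hb2, hadds⟩ :=
      addsBoxInRow_of_cells_eq_insert (mu := lam) hbmu (by rw [hmu, insert_erase hb])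
    obtain ⟨r, s⟩ := b
    simp only at hr hb2 hadds
    subst hb2
    rw [content_box, hadds.partSet_eq hr]
    refine ⟨mem_insert_self _ _, fun u hu he => ?_⟩
    obtain rfl : u = mu.part r := by omega
    simp at hu
  · rintro ⟨hw, hnot⟩
    obtain ⟨r, hr1, hr, rfl⟩ := (mem_partSet lam).mp hw
    have hpos := part_pos lam hr1 hr
    obtain ⟨mu, hadds⟩ :=
      exists_addsBoxInRow_of_sub_one_notMem hr1 hr fun h => hnot _ h (by omega)
    have hcells := hadds.cells_eq hr1
    have hmur : lam.part r = mu.part r + 1 := by rw [hadds r hr1, if_pos rfl]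
    refine ⟨_, ⟨hcells ▸ mem_insert_self _ _, mu, ?_⟩, by rw [content_box, hmur]⟩
    rw [hcells, erase_insert (box_notMem_cells mu r)]

end StrictPartition

open StrictPartition in
/-- Theorem 3.1. -/
theorem statement9 (lam lam' : StrictPartition) (m : ℕ)
    (x : Fin (m + 1) → ℕ) (y : Fin m → ℕ)
    (hx : StrictMono x) (hy : StrictMono y) (hx0 : x 0 = 1)
    (hxset : ∀ c, c ∈ lam.innerContents ↔ ∃ i, x i = c)
    (hyset : ∀ c, c ∈ lam.outerContents ↔ ∃ j, y j = c)
    (b : ℕ × ℕ) (hb : b ∉ lam.cells) (hadd : lam'.cells = insert b lam.cells)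
    (i : Fin (m + 1)) (hc : content b = x i) :
    (i = 0 →
      (H lam : ℚ) / H lam' =
        (∏ j, (((x 0).choose 2 : ℚ) - (y j).choose 2)) /
          ∏ j : Fin m, (((x 0).choose 2 : ℚ) - (x j.succ).choose 2)) ∧
    (i ≠ 0 →
      (H lam : ℚ) / H lam' =
        (1 / 2) * (∏ j, (((x i).choose 2 : ℚ) - (y j).choose 2)) /
          ∏ j ∈ Finset.univ.erase i, (((x i).choose 2 : ℚ) - (x j).choose 2)) := by
  obtain ⟨hr, hb2, hadds⟩ := addsBoxInRow_of_cells_eq_insert hb hadd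
  have hxi : x i = lam.part b.1 + 1 := by rw [← hc, content]; omega
  have hinner : univ.image x = lam.innerSet := by
    ext w
    rw [mem_image, ← mem_coe, ← innerContents_eq, hxset]
    simp
  have houter : univ.image y = lam.outerSet := by
    ext w
    rw [mem_image, ← mem_coe, ← outerContents_eq, hyset]
    simp
  have hyprod : ∀ c : ℕ, ∏ j, ((c.choose 2 : ℚ) - (y j).choose 2) =
      ∏ w ∈ lam.outerSet, ((c.choose 2 : ℚ) - w.choose 2) := fun c => by
    rw [← houter, prod_image hy.injective.injOn]
  have hxprod : ∀ (c : ℕ) (k : Fin (m + 1)),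
      ∏ j ∈ univ.erase k, ((c.choose 2 : ℚ) - (x j).choose 2) =
        ∏ w ∈ lam.innerSet.erase (x k), ((c.choose 2 : ℚ) - w.choose 2) := fun c k => by
    rw [← hinner, ← image_erase hx.injective, prod_image hx.injective.injOn]
  refine ⟨fun hi => ?_, fun hi => ?_⟩
  · subst hi
    have hsucc : ∏ j : Fin m, (((x 0).choose 2 : ℚ) - (x j.succ).choose 2) =
        ∏ j ∈ univ.erase 0, (((x 0).choose 2 : ℚ) - (x j).choose 2) := by
      rw [← compl_singleton, ← Fin.image_succ_univ, prod_image (Fin.succ_injective _).injOn]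
    rw [hyprod, hsucc, hxprod, hxi, hadds.H_div_H_of_part_eq_zero hr (by omega)]
  · have hp : lam.part b.1 ≠ 0 := fun h0 => hi (hx.injective (by omega))
    rw [hyprod, hxprod, hxi, hadds.H_div_H_of_part_ne_zero hr hp]
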